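/- Let S be a closed convex set in ℝ^m with nonempty interior. Then S equals the intersection, over all boundary points a at which S admits a unique unit outer normal ν(a), of the closed half-spaces {u ∈ ℝ^m : ⟨u − a, ν(a)⟩ ≤ 0}. -/

import Mathlib

open RealInnerProductSpace

section Aux

variable {m : ℕ}

local notation "E" => EuclideanSpace ℝ (Fin m)

/-- Uniqueness of the unit normal at a point touched by an inscribed ball. -/
lemma aux_uniq {S : Set E} {z' a : E} {r : ℝ} (hr : 0 < r)
    (hball : Metric.closedBall z' r ⊆ S) (hdist : ‖a - z'‖ = r)
    (ν' : E) (hν' : ‖ν'‖ = 1) (hsupp : ∀ u ∈ S, ⟪u - a, ν'⟫ ≤ 0) :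
    ν' = r⁻¹ • (a - z') := by
  have hu : z' + r • ν' ∈ S := by
    apply hball
    simp [Metric.mem_closedBall, dist_eq_norm, norm_smul, hν', abs_of_pos hr]
  have h1 : ⟪z' + r • ν' - a, ν'⟫ ≤ 0 := hsupp _ hu
  have h2 : ⟪z' - a, ν'⟫ + r * ⟪ν', ν'⟫ ≤ 0 := by
    have : z' + r • ν' - a = (z' - a) + r • ν' := by abel
    rw [this, inner_add_left, real_inner_smul_left] at h1
    linarith
  have hss : ⟪ν', ν'⟫ = (1:ℝ) := by
    rw [real_inner_self_eq_norm_sq, hν']; norm_num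
  have h3 : r ≤ ⟪a - z', ν'⟫ := by
    have : ⟪a - z', ν'⟫ = -⟪z' - a, ν'⟫ := by
      rw [← inner_neg_left]; congr 1; abel
    rw [this]; rw [hss] at h2; linarith
  have hCS : ⟪a - z', ν'⟫ ≤ ‖a - z'‖ * ‖ν'‖ := real_inner_le_norm _ _
  have heq : ⟪a - z', ν'⟫ = ‖a - z'‖ * ‖ν'‖ := by
    rw [hdist, hν'] at hCS ⊢; linarith
  have := inner_eq_norm_mul_iff_real.mp heq
  rw [hν', hdist, one_smul] at this
  rw [this, smul_smul, inv_mul_cancel₀ (ne_of_gt hr), one_smul]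

end Aux

set_option maxHeartbeats 1000000 in
/-- A closed convex set in `ℝ^m` with nonempty interior equals the intersection
of the closed half-spaces determined by its unique unit outer normals at smooth
boundary points (Rockafellar, Theorem 18.8). -/
theorem stmt_7 {m : ℕ} (S : Set (EuclideanSpace ℝ (Fin m)))
    (hclosed : IsClosed S) (hconv : Convex ℝ S) (hint : (interior S).Nonempty) :
    S = ⋂ (a : EuclideanSpace ℝ (Fin m)) (ν : EuclideanSpace ℝ (Fin m))
        (_ : a ∈ frontier S)
        (_ : (‖ν‖ = 1 ∧ ∀ u ∈ S, ⟪u - a, ν⟫ ≤ 0) ∧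
          ∀ ν' : EuclideanSpace ℝ (Fin m), ‖ν'‖ = 1 → (∀ u ∈ S, ⟪u - a, ν'⟫ ≤ 0) → ν' = ν),
        {u : EuclideanSpace ℝ (Fin m) | ⟪u - a, ν⟫ ≤ 0} := by
  apply Set.Subset.antisymm
  · intro u hu
    simp only [Set.mem_iInter, Set.mem_setOf_eq]
    intro a ν _ hν
    exact hν.1.2 u hu
  · intro x hx
    by_contra hxS
    obtain ⟨z, hz⟩ := hint
    -- a closed ball around z inside S
    obtain ⟨ε, hε, hball0⟩ := Metric.isOpen_iff.mp isOpen_interior z hz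
    set ρ : ℝ := ε / 2 with hρdef
    have hρ : 0 < ρ := by positivity
    have hρS : Metric.closedBall z ρ ⊆ S :=
      (Metric.closedBall_subset_ball (by linarith)).trans (hball0.trans interior_subset)
    -- find the frontier point b on the segment from z to x
    have hzS : z ∈ S := interior_subset hz
    set γ : ℝ → EuclideanSpace ℝ (Fin m) := fun t => z + t • (x - z) with hγdef
    have hγcont : Continuous γ := by fun_prop
    set T : Set ℝ := Set.Icc 0 1 ∩ γ ⁻¹' S with hTdef
    have hT0 : (0:ℝ) ∈ T := by
      refine ⟨⟨le_refl 0, zero_le_one⟩, ?_⟩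
      simp only [Set.mem_preimage, hγdef]
      simpa using hzS
    have hTne : T.Nonempty := ⟨0, hT0⟩
    have hTbdd : BddAbove T := ⟨1, fun t ht => ht.1.2⟩
    have hTclosed : IsClosed T := isClosed_Icc.inter (hclosed.preimage hγcont)
    set t₀ : ℝ := sSup T with ht₀def
    have ht₀T : t₀ ∈ T := hTclosed.csSup_mem hTne hTbdd
    have ht₀0 : 0 ≤ t₀ := ht₀T.1.1
    have ht₀1 : t₀ ≤ 1 := ht₀T.1.2
    set b : EuclideanSpace ℝ (Fin m) := γ t₀ with hbdef
    have hbS : b ∈ S := ht₀T.2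
    have ht₀lt1 : t₀ < 1 := by
      rcases lt_or_eq_of_le ht₀1 with h | h
      · exact h
      · exfalso; apply hxS
        have hbx : b = x := by
          show z + t₀ • (x - z) = x
          rw [h]; module
        rw [← hbx]; exact hbS
    have hbni : b ∉ interior S := by
      intro hbint
      have ht₀pre : t₀ ∈ γ ⁻¹' interior S := hbint
      obtain ⟨η, hη, hηsub⟩ :=
        Metric.isOpen_iff.mp (isOpen_interior.preimage hγcont) t₀ ht₀pre
      set t₁ : ℝ := min 1 (t₀ + η / 2) with ht₁def
      have ht₁gt : t₀ < t₁ := lt_min (lt_of_le_of_ne ht₀1 (ne_of_lt ht₀lt1)) (by linarith)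
      have ht₁mem : t₁ ∈ Metric.ball t₀ η := by
        rw [Metric.mem_ball, Real.dist_eq, abs_lt]
        constructor
        · have : t₀ < t₁ := ht₁gt; linarith
        · have : t₁ ≤ t₀ + η / 2 := min_le_right _ _; linarith
      have ht₁T : t₁ ∈ T := by
        refine ⟨⟨by linarith, min_le_left _ _⟩, ?_⟩
        exact Set.preimage_mono interior_subset (hηsub ht₁mem)
      have : t₁ ≤ t₀ := le_csSup hTbdd ht₁T
      linarith
    have ht₀pos : 0 < t₀ := by
      rcases lt_or_eq_of_le ht₀0 with h | h
      · exact h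
      · exfalso; apply hbni
        have : b = z := by rw [hbdef, hγdef, ← h]; simp
        rw [this]; exact hz
    have hbfront : b ∈ frontier S := by
      rw [hclosed.frontier_eq]; exact ⟨hbS, hbni⟩
    -- pick an interior point z' close to b
    set N : ℝ := ‖z - b‖ with hNdef
    have hN0 : 0 ≤ N := norm_nonneg _
    set ε₁ : ℝ := (1 - t₀) * ρ with hε₁def
    have hε₁ : 0 < ε₁ := by
      apply mul_pos; linarith; exact hρ
    set δ : ℝ := min (1/2) (ε₁ / (4 * (N + 1))) with hδdef
    have hδpos : 0 < δ := lt_min (by norm_num) (by positivity)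
    have hδle : δ ≤ ε₁ / (4 * (N + 1)) := min_le_right _ _
    have hδ1 : δ < 1 := lt_of_le_of_lt (min_le_left _ _) (by norm_num)
    set z' : EuclideanSpace ℝ (Fin m) := δ • z + (1 - δ) • b with hz'def
    have hz'int : z' ∈ interior S :=
      hconv.combo_interior_closure_mem_interior hz (subset_closure hbS) hδpos
        (by linarith) (by ring)
    have hz'b : ‖z' - b‖ = δ * N := by
      have h1 : z' - b = δ • (z - b) := by
        rw [hz'def]; module
      rw [h1, norm_smul, Real.norm_eq_abs, abs_of_pos hδpos, hNdef]
    -- the nearest point a of the closure of the complement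
    set C : Set (EuclideanSpace ℝ (Fin m)) := closure Sᶜ with hCdef
    have hCne : C.Nonempty := ⟨x, subset_closure hxS⟩
    have hCclosed : IsClosed C := isClosed_closure
    have hCeq : C = (interior S)ᶜ := closure_compl
    set r' : ℝ := Metric.infDist z' C with hr'def
    have hz'nC : z' ∉ C := by rw [hCeq]; simpa using hz'int
    have hr'pos : 0 < r' := (hCclosed.notMem_iff_infDist_pos hCne).mp hz'nC
    obtain ⟨a, haC, hdista⟩ := hCclosed.exists_infDist_eq_dist hCne z'
    have hbC : b ∈ C := by rw [hCeq]; exact hbni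
    have hr'le : r' ≤ dist z' b := Metric.infDist_le_dist_of_mem hbC
    have hballS : Metric.closedBall z' r' ⊆ S := by
      have hob : Metric.ball z' r' ⊆ S := by
        intro w hw
        by_contra hwS
        have h1 : r' ≤ dist z' w := Metric.infDist_le_dist_of_mem (subset_closure hwS)
        rw [Metric.mem_ball, dist_comm] at hw
        linarith
      rw [← closure_ball z' (ne_of_gt hr'pos)]
      calc closure (Metric.ball z' r') ⊆ closure S := closure_mono hob
        _ = S := hclosed.closure_eq
    have haS : a ∈ S := hballS (by rw [Metric.mem_closedBall, dist_comm]; exact le_of_eq hdista.symm)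
    have hafront : a ∈ frontier S := by
      rw [frontier_eq_closure_inter_closure]
      exact ⟨subset_closure haS, haC⟩
    have hnorm_az : ‖a - z'‖ = r' := by
      rw [← dist_eq_norm, dist_comm]; exact hdista.symm
    set ν : EuclideanSpace ℝ (Fin m) := r'⁻¹ • (a - z') with hνdef
    have hνnorm : ‖ν‖ = 1 := by
      rw [hνdef, norm_smul, hnorm_az, Real.norm_eq_abs, abs_of_pos (by positivity),
        inv_mul_cancel₀ (ne_of_gt hr'pos)]
    -- supporting hyperplane at a via Hahn-Banach
    have hani : a ∉ interior S := by
      have := haC; rw [hCeq] at this; exact this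
    obtain ⟨f, hf⟩ := geometric_hahn_banach_open_point hconv.interior isOpen_interior hani
    have hfS : ∀ u ∈ S, f u ≤ f a := by
      intro u hu
      have htend : Filter.Tendsto (fun t : ℝ => f (u + t • (z - u)))
          (nhdsWithin 0 (Set.Ioi 0)) (nhds (f u)) := by
        have hc : Continuous fun t : ℝ => f (u + t • (z - u)) := by fun_prop
        have h0 := hc.tendsto 0
        simp only [zero_smul, add_zero] at h0
        exact h0.mono_left nhdsWithin_le_nhds
      apply le_of_tendsto htend
      filter_upwards [Ioc_mem_nhdsGT_of_mem ⟨le_refl (0:ℝ), zero_lt_one⟩] with t ht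
      exact (hf _ (hconv.add_smul_sub_mem_interior hu hz ht)).le
    have hfza : f z < f a := hf z hz
    set v : EuclideanSpace ℝ (Fin m) := (InnerProductSpace.toDual ℝ _).symm f with hvdef
    have hvinner : ∀ w, ⟪v, w⟫ = f w := fun w => InnerProductSpace.toDual_symm_apply
    have hvne : v ≠ 0 := by
      intro h
      have h1 : (0:ℝ) = f z := by rw [← hvinner z, h, inner_zero_left]
      have h2 : (0:ℝ) = f a := by rw [← hvinner a, h, inner_zero_left]
      rw [← h1, ← h2] at hfza; exact lt_irrefl _ hfza
    set ν₂ : EuclideanSpace ℝ (Fin m) := ‖v‖⁻¹ • v with hν₂def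
    have hvpos : 0 < ‖v‖ := norm_pos_iff.mpr hvne
    have hν₂norm : ‖ν₂‖ = 1 := by
      rw [hν₂def, norm_smul, Real.norm_eq_abs, abs_of_pos (by positivity),
        inv_mul_cancel₀ (ne_of_gt hvpos)]
    have hν₂supp : ∀ u ∈ S, ⟪u - a, ν₂⟫ ≤ 0 := by
      intro u hu
      have h1 : ⟪u - a, v⟫ = f u - f a := by
        rw [real_inner_comm, hvinner (u - a), map_sub]
      rw [hν₂def, real_inner_smul_right, h1]
      have := hfS u hu
      have hinv : 0 ≤ ‖v‖⁻¹ := by positivity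
      nlinarith
    have hν₂ν : ν₂ = ν := aux_uniq hr'pos hballS hnorm_az ν₂ hν₂norm hν₂supp
    have hsupp : ∀ u ∈ S, ⟪u - a, ν⟫ ≤ 0 := by rw [← hν₂ν]; exact hν₂supp
    have huniq : ∀ ν' : EuclideanSpace ℝ (Fin m), ‖ν'‖ = 1 →
        (∀ u ∈ S, ⟪u - a, ν'⟫ ≤ 0) → ν' = ν := fun ν' h1 h2 =>
      aux_uniq hr'pos hballS hnorm_az ν' h1 h2
    -- x lies in the half-space at a by assumption
    have hxin : ⟪x - a, ν⟫ ≤ 0 := by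
      have h1 := Set.mem_iInter.mp hx a
      have h2 := Set.mem_iInter.mp h1 ν
      have h3 := Set.mem_iInter.mp h2 hafront
      have h4 := Set.mem_iInter.mp h3 ⟨⟨hνnorm, hsupp⟩, huniq⟩
      exact h4
    -- but the half-space at a excludes x : contradiction
    have key1 : ρ ≤ ⟪a - z, ν⟫ := by
      have hmem : z + ρ • ν ∈ S := hρS (by
        simp [Metric.mem_closedBall, dist_eq_norm, norm_smul, hνnorm, abs_of_pos hρ])
      have h1 := hsupp _ hmem
      have h2 : z + ρ • ν - a = (z - a) + ρ • ν := by abel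
      rw [h2, inner_add_left, real_inner_smul_left] at h1
      have hss : ⟪ν, ν⟫ = (1:ℝ) := by
        rw [real_inner_self_eq_norm_sq, hνnorm]; norm_num
      have h3 : ⟪a - z, ν⟫ = -⟪z - a, ν⟫ := by
        rw [← inner_neg_left]; congr 1; abel
      rw [h3]; rw [hss] at h1; linarith
    have key2 : -‖b - a‖ ≤ ⟪b - a, ν⟫ := by
      have h1 : ⟪a - b, ν⟫ ≤ ‖a - b‖ * ‖ν‖ := real_inner_le_norm _ _
      have h2 : ⟪a - b, ν⟫ = -⟪b - a, ν⟫ := by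
        rw [← inner_neg_left]; congr 1; abel
      rw [hνnorm, mul_one, h2, norm_sub_rev] at h1
      linarith
    have hba : ‖b - a‖ < ε₁ := by
      have h1 : ‖b - a‖ ≤ ‖b - z'‖ + ‖z' - a‖ := by
        have : b - a = (b - z') + (z' - a) := by abel
        rw [this]; exact norm_add_le _ _
      have h2 : ‖z' - a‖ = r' := by rw [norm_sub_rev]; exact hnorm_az
      have h3 : ‖b - z'‖ = δ * N := by rw [norm_sub_rev]; exact hz'b
      have h4 : r' ≤ δ * N := by
        rw [dist_eq_norm] at hr'le
        rw [← hz'b]; exact hr'le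
      have h5 : ‖b - a‖ ≤ 2 * (δ * N) := by
        rw [h2, h3] at h1; linarith
      have h6 : 2 * (δ * N) < ε₁ := by
        have h7 : δ * (N + 1) ≤ ε₁ / 4 := by
          have hpos : (0:ℝ) < N + 1 := by linarith
          have h8 := mul_le_mul_of_nonneg_right hδle hpos.le
          have heq : ε₁ / (4 * (N + 1)) * (N + 1) = ε₁ / 4 := by
            field_simp
          rw [heq] at h8
          linarith
        nlinarith
      linarith
    have hident : t₀ • (x - a) = (b - a) + (1 - t₀) • (a - z) := by
      have hb2 : b = z + t₀ • (x - z) := rfl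
      rw [hb2]; module
    have hcomp : t₀ * ⟪x - a, ν⟫ = ⟪b - a, ν⟫ + (1 - t₀) * ⟪a - z, ν⟫ := by
      rw [← real_inner_smul_left, hident, inner_add_left, real_inner_smul_left]
    have hfin : 0 < t₀ * ⟪x - a, ν⟫ := by
      rw [hcomp, hε₁def] at *
      nlinarith
    nlinarith
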